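/- arXiv:1005.0185 — 2 statements merged into one kernel-verified Lean document; each statement's English description precedes it below -/
import Mathlib

section
/- Let A be an associative algebra over ℂ, M a left A-module, P ∈ ℂ[X] a polynomial, and e, f, h ∈ A with he − eh = e and ef − fe = P(h). Let v ∈ M with h·v = ξ·v and f·v = 0, and let n be a positive integer such that eⁿ·v = 0 and e^{n−1}·v ≠ 0. Then Σ_{m=0}^{n−1} P(ξ+m) = 0. -/
private lemma pow_smul_eig {A : Type*} [Ring A] [Algebra ℂ A]
    {M : Type*} [AddCommGroup M] [Module ℂ M] [Module A M] [IsScalarTower ℂ A M]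
    (h : A) (c : ℂ) (w : M) (hw : h • w = c • w) (k : ℕ) :
    (h ^ k) • w = (c ^ k) • w := by
  induction k with
  | zero => simp
  | succ k ih =>
      rw [pow_succ, pow_succ, mul_smul, hw, smul_comm, ih, smul_smul, mul_comm]

private lemma aeval_smul_eig {A : Type*} [Ring A] [Algebra ℂ A]
    {M : Type*} [AddCommGroup M] [Module ℂ M] [Module A M] [IsScalarTower ℂ A M]
    (h : A) (c : ℂ) (w : M) (hw : h • w = c • w) (P : Polynomial ℂ) :
    (Polynomial.aeval h P) • w = (P.eval c) • w := by
  induction P using Polynomial.induction_on' with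
  | add p q hp hq => rw [map_add, add_smul, hp, hq, Polynomial.eval_add, add_smul]
  | monomial k a =>
      rw [Polynomial.aeval_monomial, Polynomial.eval_monomial, mul_smul,
        pow_smul_eig h c w hw k, algebraMap_smul, smul_smul]

/-- If `A` is an associative `ℂ`-algebra, `M` a left `A`-module, `P ∈ ℂ[X]`, and
`e, f, h ∈ A` satisfy `he − eh = e` and `ef − fe = P(h)`, and `v ∈ M` satisfies
`h·v = ξ·v`, `f·v = 0`, and `n` is a positive integer with `eⁿ·v = 0` and
`e^{n−1}·v ≠ 0`, then `Σ_{m=0}^{n−1} P(ξ+m) = 0`. -/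
theorem sum_eval_eq_zero_of_top_dim {A : Type*} [Ring A] [Algebra ℂ A]
    {M : Type*} [AddCommGroup M] [Module ℂ M] [Module A M] [IsScalarTower ℂ A M]
    (P : Polynomial ℂ) (e f h : A)
    (hhe : h * e - e * h = e) (hef : e * f - f * e = Polynomial.aeval h P)
    (ξ : ℂ) (v : M) (hhv : h • v = ξ • v) (hfv : f • v = 0)
    (n : ℕ) (hn : 0 < n) (hvanish : e ^ n • v = 0) (hnonzero : e ^ (n - 1) • v ≠ 0) :
    ∑ m ∈ Finset.range n, P.eval (ξ + m) = 0 := by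
  have hhe' : h * e = e * h + e := (sub_eq_iff_eq_add.mp hhe).trans (add_comm _ _)
  have hfe : f * e = e * f - Polynomial.aeval h P := by
    rw [eq_sub_iff_add_eq, add_comm]
    exact (sub_eq_iff_eq_add.mp hef).symm
  -- h-eigenvalue of e^i • v
  have heig : ∀ i : ℕ, h • (e ^ i • v) = (ξ + i) • (e ^ i • v) := by
    intro i
    induction i with
    | zero => simpa using hhv
    | succ i ih =>
        have key : h • (e ^ (i+1) • v) = e • (h • (e ^ i • v)) + e • (e ^ i • v) := by
          simp only [pow_succ', ← mul_smul]
          rw [← mul_assoc, hhe', add_mul, add_smul, mul_assoc]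
        rw [key, ih, smul_comm e, ← mul_smul e, ← pow_succ', Nat.cast_succ]
        generalize e ^ (i+1) • v = w
        module
  -- f action
  have hfact : ∀ i : ℕ, f • (e ^ (i+1) • v)
      = -(∑ m ∈ Finset.range (i+1), P.eval (ξ + m)) • (e ^ i • v) := by
    intro i
    induction i with
    | zero =>
        rw [pow_one, ← mul_smul, hfe, sub_smul, mul_smul, hfv, smul_zero, zero_sub,
          aeval_smul_eig h ξ v hhv]
        simp
    | succ i ih =>
        have step : f • (e ^ (i+2) • v)
            = e • (f • (e ^ (i+1) • v)) - (Polynomial.aeval h P) • (e ^ (i+1) • v) := by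
          have h2 : e ^ (i+2) = e * e ^ (i+1) := by rw [pow_succ']
          rw [h2]
          simp only [← mul_smul]
          rw [← mul_assoc, hfe, sub_mul, sub_smul, mul_assoc]
        rw [step, ih, aeval_smul_eig h _ _ (heig (i+1)), smul_comm e,
          ← mul_smul e, ← pow_succ']
        push_cast [Finset.sum_range_succ]
        generalize e ^ (i+1) • v = w
        module
  -- conclude
  obtain ⟨k, rfl⟩ : ∃ k, n = k + 1 := ⟨n - 1, (Nat.succ_pred_eq_of_pos hn).symm⟩
  have hz := hfact k
  rw [hvanish, smul_zero] at hz
  have hz' : (∑ m ∈ Finset.range (k+1), P.eval (ξ + m)) • (e ^ k • v) = 0 := by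
    rw [← neg_neg (∑ m ∈ Finset.range (k+1), P.eval (ξ + m)), neg_smul, ← hz, neg_zero]
  rcases smul_eq_zero.mp hz' with h1 | h2
  · exact h1
  · exact absurd h2 (by simpa using hnonzero)
end

section
/- Let p ≥ 3 be an odd integer and k = p/2 − 3. Then the map (i,j) ↦ (ξ_{i,j}, χ_{i,j}) is injective on the set {(i,j) ∈ ℤ² : 1 ≤ i ≤ p−2 and 1 ≤ j ≤ p−i−1}. -/
/-- `ξ_{i,j} = (−2i − j + 2k + 6)/3`, with integer indices. -/
noncomputable def xiBP (k : ℝ) (i j : ℤ) : ℝ := (-2 * (i : ℝ) - j + 2 * k + 6) / 3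

/-- `χ_{i,j} = (i² + ji − ki − 3i + j² − 6j − 2jk + 3k + 6)/(3(k+3))`, with integer indices. -/
noncomputable def chiBP (k : ℝ) (i j : ℤ) : ℝ :=
  ((i : ℝ) ^ 2 + j * i - k * i - 3 * i + (j : ℝ) ^ 2 - 6 * j - 2 * j * k + 3 * k + 6)
    / (3 * (k + 3))

/-!
`ξ` only sees `s = 2i + j`, and on a line `2i + j = s` the numerator of `χ`, namely
`i² + ij + j² − (k+3)(i + 2j) + const`, is a quadratic in `i` whose two roots of any level
sum to `s − (k+3)`. So a collision with `i ≠ i'` forces `k + 3 ∈ ℤ`, which fails for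
`k + 3 = p/2` with `p` odd.
-/

theorem xiBP_eq_xiBP_iff {k : ℝ} {i j i' j' : ℤ} :
    xiBP k i j = xiBP k i' j' ↔ 2 * i + j = 2 * i' + j' := by
  unfold xiBP
  constructor
  · intro h
    exact_mod_cast (by linarith : (2 * i + j : ℝ) = 2 * i' + j')
  · intro h
    have h' : (2 * i + j : ℝ) = 2 * i' + j' := by exact_mod_cast h
    linarith

theorem mul_sub_chiBP_of_xiBP_eq {k : ℝ} (hk : k + 3 ≠ 0) {i j i' j' : ℤ}
    (hs : 2 * i + j = 2 * i' + j') :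
    (k + 3) * (chiBP k i j - chiBP k i' j') = (i - i') * (k + 3 - (i + j - i')) := by
  obtain rfl : j' = 2 * i + j - 2 * i' := by omega
  unfold chiBP
  push_cast
  field_simp
  ring

theorem injective_xiBP_chiBP {k : ℝ} (hk : ∀ n : ℤ, k + 3 ≠ n) :
    Function.Injective (fun q : ℤ × ℤ => (xiBP k q.1 q.2, chiBP k q.1 q.2)) := by
  rintro ⟨i, j⟩ ⟨i', j'⟩ h
  obtain ⟨hxi, hchi⟩ := Prod.mk.inj h
  have hs := xiBP_eq_xiBP_iff.mp hxi
  have hprod := mul_sub_chiBP_of_xiBP_eq (by exact_mod_cast hk 0) hs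
  rw [hchi, sub_self, mul_zero, eq_comm, mul_eq_zero] at hprod
  rcases hprod with hi | hk_int
  · have hi : i = i' := by exact_mod_cast sub_eq_zero.mp hi
    subst hi
    simp only [Prod.mk.injEq, true_and]
    omega
  · exact absurd (by push_cast; linarith) (hk (i + j - i'))

theorem half_ne_intCast_of_odd {p : ℤ} (hp : Odd p) (n : ℤ) : (p : ℝ) / 2 ≠ n := by
  intro h
  have hpn : p = 2 * n := by exact_mod_cast (div_eq_iff two_ne_zero).mp h |>.trans (mul_comm _ _)
  exact Int.not_even_iff_odd.mpr hp ⟨n, by omega⟩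

theorem injOn_xiBP_chiBP_general (p : ℤ) (hodd : Odd p)
    (k : ℝ) (hk : k = (p : ℝ) / 2 - 3) :
    Set.InjOn (fun q : ℤ × ℤ => (xiBP k q.1 q.2, chiBP k q.1 q.2))
      {q : ℤ × ℤ | 1 ≤ q.1 ∧ q.1 ≤ p - 2 ∧ 1 ≤ q.2 ∧ q.2 ≤ p - q.1 - 1} := by
  have hk3 : k + 3 = (p : ℝ) / 2 := by rw [hk]; ring
  refine (injective_xiBP_chiBP fun n => ?_).injOn
  rw [hk3]
  exact half_ne_intCast_of_odd hodd n

/-- Let `p ≥ 3` be an odd integer and `k = p/2 − 3`. Then `(i,j) ↦ (ξ_{i,j}, χ_{i,j})`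
is injective on `{(i,j) ∈ ℤ² : 1 ≤ i ≤ p−2, 1 ≤ j ≤ p−i−1}`. -/
theorem injOn_xiBP_chiBP (p : ℤ) (hp3 : 3 ≤ p) (hodd : Odd p)
    (k : ℝ) (hk : k = (p : ℝ) / 2 - 3) :
    Set.InjOn (fun q : ℤ × ℤ => (xiBP k q.1 q.2, chiBP k q.1 q.2))
      {q : ℤ × ℤ | 1 ≤ q.1 ∧ q.1 ≤ p - 2 ∧ 1 ≤ q.2 ∧ q.2 ≤ p - q.1 - 1} :=
  injOn_xiBP_chiBP_general p hodd k hk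
end
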